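/- Let W be a nonnegative random variable with finite mean. The following are equivalent: (1) W has the exponential distribution with mean one; (2) for all absolutely continuous functions f with bounded derivative, E f′(W) = E f(W) − f(0); (3) E W = 1 and W is equal in distribution to U·W^(1), where W^(1) has the size-biased (1-power bias) distribution of W, and U is uniform on (0,1) and independent of W^(1). -/

import Mathlib

/-!
Taking `f = id` and `f = min · a` in (2) gives `E W = 1` and `P(W ≤ a) = E[min W a]` for `a ≥ 0`;
when `E W = 1` the right-hand side is also `P(U W⁽¹⁾ ≤ a) = E[W P(U ≤ a / W)]`, which gives (3).
Conversely, Fubini gives `E[f W] - f 0 = ∫_{t ≥ 0} f' t P(W > t) dt`; for `f = min · a` this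
turns (3) into the renewal equation `F a = ∫₀ᵃ (1 - F t) dt` for the distribution function `F`
of `W`. The exponential law solves it, and solutions are unique: the difference `D` of two of
them satisfies `|D a| ≤ ∫₀ᵃ |D|`, hence `|D a| ≤ aⁿ / n!` for every `n`. The same Fubini
identity with `P(W > t) = e^{-t}` is Stein's identity (2) for the exponential law.
-/

open MeasureTheory ProbabilityTheory

/-- The `α`-power bias distribution of a distribution `μ` on `ℝ`. -/
noncomputable def powerBias (α : ℝ) (μ : Measure ℝ) : Measure ℝ :=
  (ENNReal.ofReal (∫ x, |x| ^ α ∂μ))⁻¹ •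
    μ.withDensity (fun x => ENNReal.ofReal (|x| ^ α))

/-- The uniform probability measure on the open interval `(a, b)`. -/
noncomputable def uniformIoo (a b : ℝ) : Measure ℝ :=
  (ENNReal.ofReal (b - a))⁻¹ • volume.restrict (Set.Ioo a b)

/-- `f` is absolutely continuous with (a.e.) derivative `f'`, and `f'` is bounded. -/
def IsAbsContWithBddDeriv (f f' : ℝ → ℝ) : Prop :=
  Measurable f' ∧ (∃ C, ∀ x, |f' x| ≤ C) ∧ ∀ x, f x = f 0 + ∫ t in (0:ℝ)..x, f' t

open Real Set Filter
open scoped ENNReal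

namespace IsAbsContWithBddDeriv

variable {f f' : ℝ → ℝ}

theorem intervalIntegrable (hf : IsAbsContWithBddDeriv f f') (a b : ℝ) :
    IntervalIntegrable f' volume a b := by
  obtain ⟨hm, ⟨C, hC⟩, -⟩ := hf
  exact IntervalIntegrable.mono_fun' (g := fun _ => C) intervalIntegrable_const
    hm.aestronglyMeasurable.restrict (ae_of_all _ hC)

theorem continuous (hf : IsAbsContWithBddDeriv f f') : Continuous f :=
  (continuous_const.add (intervalIntegral.continuous_primitive hf.intervalIntegrable 0)).congr
    fun x => (hf.2.2 x).symm

theorem abs_sub_le (hf : IsAbsContWithBddDeriv f f') : ∃ C, ∀ x, |f x - f 0| ≤ C * |x| := by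
  obtain ⟨-, ⟨C, hC⟩, hfeq⟩ := hf
  refine ⟨C, fun x => ?_⟩
  rw [hfeq x, add_sub_cancel_left, ← Real.norm_eq_abs]
  simpa using intervalIntegral.norm_integral_le_of_norm_le_const (a := 0) (b := x)
    fun t _ => (Real.norm_eq_abs _).trans_le (hC t)

theorem integrable {μ : Measure ℝ} [IsFiniteMeasure μ] (hf : IsAbsContWithBddDeriv f f')
    (hμ : Integrable id μ) : Integrable f μ := by
  obtain ⟨C, hC⟩ := hf.abs_sub_le
  refine ((hμ.norm.const_mul C).add (integrable_const |f 0|)).mono'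
    hf.continuous.aestronglyMeasurable (ae_of_all _ fun x => ?_)
  calc ‖f x‖ = |(f x - f 0) + f 0| := by rw [sub_add_cancel, Real.norm_eq_abs]
    _ ≤ C * |x| + |f 0| := by linarith [abs_add_le (f x - f 0) (f 0), hC x]
    _ = _ := by simp

end IsAbsContWithBddDeriv

theorem isAbsContWithBddDeriv_id : IsAbsContWithBddDeriv id (fun _ => 1) :=
  ⟨measurable_const, ⟨1, fun _ => by norm_num⟩, fun x => by simp⟩

theorem isAbsContWithBddDeriv_min {a : ℝ} (ha : 0 ≤ a) :
    IsAbsContWithBddDeriv (fun x => min x a) ((Iic a).indicator 1) := by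
  refine ⟨measurable_one.indicator measurableSet_Iic, ⟨1, fun x => ?_⟩, fun x => ?_⟩
  · by_cases hx : x ∈ Iic a <;> simp [hx]
  simp only [min_eq_left ha, zero_add]
  rcases le_total x a with hxa | hax
  · have h1 : EqOn ((Iic a).indicator 1) (1 : ℝ → ℝ) (uIcc 0 x) := fun t ht =>
      indicator_of_mem (show t ∈ Iic a from
        (le_max_iff.mp ht.2).elim (·.trans ha) (·.trans hxa)) _
    simp [min_eq_left hxa, intervalIntegral.integral_congr h1]
  · rw [min_eq_right hax]
    exact ((intervalIntegral.integral_indicator (μ := volume) (f := (1 : ℝ → ℝ)) ⟨ha, hax⟩).trans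
      (by simp)).symm

theorem integral_sub_eq_setIntegral_mul_measureReal_Ioi {f f' : ℝ → ℝ} {μ : Measure ℝ}
    [IsFiniteMeasure μ] (hμ0 : ∀ᵐ x ∂μ, 0 ≤ x) (hμ : Integrable id μ)
    (hf : IsAbsContWithBddDeriv f f') :
    ∫ x, (f x - f 0) ∂μ = ∫ t in Ici 0, f' t * μ.real (Ioi t) := by
  obtain ⟨hf'm, ⟨C, hC⟩, hfeq⟩ := hf
  set S : Set (ℝ × ℝ) := {p | 0 ≤ p.2 ∧ p.2 < p.1}
  have hS : MeasurableSet S :=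
    (measurableSet_le measurable_const measurable_snd).inter
      (measurableSet_lt measurable_snd measurable_fst)
  set g : ℝ × ℝ → ℝ := S.indicator fun p => f' p.2
  have hS_lt_top : μ.prod volume S < ∞ := by
    rw [Measure.prod_apply hS]
    change ∫⁻ x, volume (Ico 0 x) ∂μ < ∞
    simpa using hμ.lintegral_lt_top
  have hg : Integrable g (μ.prod volume) :=
    (integrable_indicator_iff hS).2 <| (integrableOn_const hS_lt_top.ne).mono'
      (hf'm.comp measurable_snd).aestronglyMeasurable.restrict (ae_of_all _ fun p => hC p.2)
  calc ∫ x, (f x - f 0) ∂μ = ∫ x, ∫ t, g (x, t) ∂volume ∂μ := by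
        refine integral_congr_ae (hμ0.mono fun x hx => ?_)
        change f x - f 0 = ∫ t, (Ico 0 x).indicator f' t
        rw [hfeq x, add_sub_cancel_left, integral_indicator measurableSet_Ico,
          integral_Ico_eq_integral_Ioc, intervalIntegral.integral_of_le hx]
    _ = ∫ t, ∫ x, g (x, t) ∂μ ∂volume := integral_integral_swap hg
    _ = ∫ t in Ici 0, f' t * μ.real (Ioi t) := by
        rw [← integral_indicator measurableSet_Ici]
        congr 1 with t
        by_cases ht : 0 ≤ t
        · have : (fun x => g (x, t)) = (Ioi t).indicator fun _ => f' t := by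
            ext x; simp [g, S, indicator_apply, ht]
          rw [this, integral_indicator_const _ measurableSet_Ioi, smul_eq_mul, mul_comm,
            indicator_of_mem (mem_Ici.2 ht)]
        · have : ∀ x, g (x, t) = 0 := fun x => by simp [g, S, ht]
          simp [this, ht]

theorem integral_min_eq_intervalIntegral_measureReal_Ioi {μ : Measure ℝ} [IsFiniteMeasure μ]
    (hμ0 : ∀ᵐ x ∂μ, 0 ≤ x) (hμ : Integrable id μ) {a : ℝ} (ha : 0 ≤ a) :
    ∫ x, min x a ∂μ = ∫ t in 0..a, μ.real (Ioi t) := by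
  have h := integral_sub_eq_setIntegral_mul_measureReal_Ioi hμ0 hμ (isAbsContWithBddDeriv_min ha)
  simp only [min_eq_left ha, sub_zero] at h
  rw [h, intervalIntegral.integral_of_le ha, ← integral_Icc_eq_integral_Ioc, ← Ici_inter_Iic,
    inter_comm, ← Measure.restrict_restrict measurableSet_Iic,
    ← integral_indicator measurableSet_Iic]
  congr 1 with t
  by_cases ht : t ∈ Iic a <;> simp [ht]

theorem measure_Iic_eq_zero_of_neg {μ : Measure ℝ} (hμ0 : ∀ᵐ x ∂μ, 0 ≤ x) {a : ℝ} (ha : a < 0) :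
    μ (Iic a) = 0 :=
  measure_mono_null (fun _ hx => not_le.2 (lt_of_le_of_lt hx ha)) (ae_iff.1 hμ0)

theorem measureReal_Ioi_eq_one_sub_cdf (μ : Measure ℝ) [IsProbabilityMeasure μ] (t : ℝ) :
    μ.real (Ioi t) = 1 - cdf μ t := by
  rw [← compl_Iic, probReal_compl_eq_one_sub measurableSet_Iic, cdf_eq_real]

instance : IsProbabilityMeasure (expMeasure 1) := isProbabilityMeasure_expMeasure one_pos

theorem expMeasure_one_eq_withDensity :
    expMeasure 1 = (volume.restrict (Ici 0)).withDensity fun x => ENNReal.ofReal (exp (-x)) := by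
  rw [← withDensity_indicator measurableSet_Ici]
  change volume.withDensity (exponentialPDF 1) = _
  congr 1 with x
  by_cases hx : 0 ≤ x <;> simp [exponentialPDF_eq, hx]

theorem ae_nonneg_expMeasure_one : ∀ᵐ x ∂expMeasure 1, 0 ≤ x := by
  rw [expMeasure_one_eq_withDensity]
  exact (withDensity_absolutelyContinuous _ _).ae_le (ae_restrict_mem measurableSet_Ici)

theorem integral_expMeasure_one (g : ℝ → ℝ) :
    ∫ x, g x ∂expMeasure 1 = ∫ x in Ici 0, exp (-x) * g x := by
  rw [expMeasure_one_eq_withDensity, integral_withDensity_eq_integral_toReal_smul (by fun_prop)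
    (ae_of_all _ fun _ => ENNReal.ofReal_lt_top)]
  simp [(exp_pos _).le]

theorem integrable_id_expMeasure_one : Integrable id (expMeasure 1) := by
  rw [expMeasure_one_eq_withDensity, integrable_withDensity_iff_integrable_smul' (by fun_prop)
    (ae_of_all _ fun _ => ENNReal.ofReal_lt_top)]
  refine (integrableOn_Ici_iff_integrableOn_Ioi (by simp)).2 ?_
  have := GammaIntegral_convergent (s := 2) two_pos
  norm_num at this
  simpa [(exp_pos _).le] using this

theorem measureReal_Ioi_expMeasure_one {t : ℝ} (ht : 0 ≤ t) :
    (expMeasure 1).real (Ioi t) = exp (-t) := by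
  rw [measureReal_Ioi_eq_one_sub_cdf, cdf_expMeasure_eq one_pos, if_pos ht, one_mul,
    sub_sub_cancel]

theorem integral_deriv_expMeasure_one {f f' : ℝ → ℝ} (hf : IsAbsContWithBddDeriv f f') :
    ∫ x, f' x ∂expMeasure 1 = ∫ x, f x ∂expMeasure 1 - f 0 := by
  calc ∫ x, f' x ∂expMeasure 1 = ∫ t in Ici 0, f' t * (expMeasure 1).real (Ioi t) := by
        rw [integral_expMeasure_one]
        refine setIntegral_congr_fun measurableSet_Ici fun t ht => ?_
        rw [measureReal_Ioi_expMeasure_one ht, mul_comm]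
    _ = ∫ x, (f x - f 0) ∂expMeasure 1 :=
        (integral_sub_eq_setIntegral_mul_measureReal_Ioi ae_nonneg_expMeasure_one
          integrable_id_expMeasure_one hf).symm
    _ = ∫ x, f x ∂expMeasure 1 - f 0 := by
        rw [integral_sub (hf.integrable integrable_id_expMeasure_one) (integrable_const _)]
        simp

theorem measureReal_Iic_expMeasure_one {a : ℝ} (ha : 0 ≤ a) :
    (expMeasure 1).real (Iic a) = ∫ t in 0..a, (expMeasure 1).real (Ioi t) := by
  have h : EqOn (fun t => (expMeasure 1).real (Ioi t)) (fun t => exp (-t)) (uIcc 0 a) :=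
    fun t ht => measureReal_Ioi_expMeasure_one (uIcc_of_le ha ▸ ht).1
  rw [← cdf_eq_real, cdf_expMeasure_eq one_pos, if_pos ha, intervalIntegral.integral_congr h,
    intervalIntegral.integral_comp_neg fun t => exp t, integral_exp]
  simp

theorem eqOn_zero_of_abs_le_integral_abs {D : ℝ → ℝ} {M : ℝ} (hD : Measurable D)
    (hM : ∀ x, 0 ≤ x → |D x| ≤ M) (h : ∀ a, 0 ≤ a → |D a| ≤ ∫ t in 0..a, |D t|) :
    EqOn D 0 (Ici 0) := by
  have hint (a : ℝ) (ha : 0 ≤ a) : IntervalIntegrable (fun t => |D t|) volume 0 a :=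
    intervalIntegrable_const.mono_fun' hD.abs.aestronglyMeasurable.restrict <|
      (ae_restrict_iff' measurableSet_uIoc).2 <| ae_of_all _ fun x hx => by
        simpa using hM x (uIoc_of_le ha ▸ hx).1.le
  have hbound (n : ℕ) : ∀ a, 0 ≤ a → |D a| ≤ M * a ^ n / n.factorial := by
    induction n with
    | zero => simpa using hM
    | succ n ih =>
      intro a ha
      calc |D a| ≤ ∫ t in 0..a, |D t| := h a ha
        _ ≤ ∫ t in 0..a, M / n.factorial * t ^ n :=
          intervalIntegral.integral_mono_on ha (hint a ha)
            (Continuous.intervalIntegrable (by fun_prop) _ _) fun t ht => by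
            simpa [mul_div_right_comm] using ih t ht.1
        _ = M * a ^ (n + 1) / (n + 1).factorial := by
          rw [intervalIntegral.integral_const_mul, integral_pow, Nat.factorial_succ]
          push_cast
          field_simp
          ring
  intro a ha
  have hlim : Tendsto (fun n : ℕ => M * a ^ n / n.factorial) atTop (nhds 0) := by
    simpa [mul_div_assoc] using (FloorSemiring.tendsto_pow_div_factorial_atTop a).const_mul M
  exact abs_nonpos_iff.1 (ge_of_tendsto' hlim fun n => hbound n a ha)

theorem cdf_eq_integral_one_sub_cdf {μ : Measure ℝ} [IsProbabilityMeasure μ]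
    (hμ : ∀ a, 0 ≤ a → μ.real (Iic a) = ∫ t in 0..a, μ.real (Ioi t)) {a : ℝ} (ha : 0 ≤ a) :
    cdf μ a = ∫ t in 0..a, (1 - cdf μ t) := by
  rw [cdf_eq_real, hμ a ha]
  simp_rw [measureReal_Ioi_eq_one_sub_cdf]

theorem eq_of_measureReal_Iic_eq_integral {μ ν : Measure ℝ} [IsProbabilityMeasure μ]
    [IsProbabilityMeasure ν] (hμ0 : ∀ᵐ x ∂μ, 0 ≤ x) (hν0 : ∀ᵐ x ∂ν, 0 ≤ x)
    (hμ : ∀ a, 0 ≤ a → μ.real (Iic a) = ∫ t in 0..a, μ.real (Ioi t))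
    (hν : ∀ a, 0 ≤ a → ν.real (Iic a) = ∫ t in 0..a, ν.real (Ioi t)) :
    μ = ν := by
  have hD_eq (a : ℝ) (ha : 0 ≤ a) : cdf μ a - cdf ν a = -∫ t in 0..a, (cdf μ t - cdf ν t) := by
    have hint (ρ : Measure ℝ) : IntervalIntegrable (fun t => 1 - cdf ρ t) volume 0 a :=
      Antitone.intervalIntegrable fun s t hst => sub_le_sub_left (monotone_cdf ρ hst) 1
    rw [cdf_eq_integral_one_sub_cdf hμ ha, cdf_eq_integral_one_sub_cdf hν ha,
      ← intervalIntegral.integral_sub (hint μ) (hint ν), ← intervalIntegral.integral_neg]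
    congr 1 with t
    ring
  have hD_zero := eqOn_zero_of_abs_le_integral_abs (D := fun a => cdf μ a - cdf ν a) (M := 1)
    ((monotone_cdf μ).measurable.sub (monotone_cdf ν).measurable)
    (fun x _ => abs_sub_le_iff.2
      ⟨by linarith [cdf_le_one μ x, cdf_nonneg ν x], by linarith [cdf_le_one ν x, cdf_nonneg μ x]⟩)
    fun a ha => by
      rw [hD_eq a ha, abs_neg]
      exact intervalIntegral.abs_integral_le_integral_abs ha
  refine Measure.eq_of_cdf μ ν (StieltjesFunction.ext fun a => ?_)
  rcases le_or_gt 0 a with ha | ha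
  · exact sub_eq_zero.1 (hD_zero ha)
  · simp [cdf_eq_real, measureReal_def, measure_Iic_eq_zero_of_neg hμ0 ha,
      measure_Iic_eq_zero_of_neg hν0 ha]

theorem powerBias_one_eq_withDensity {μ : Measure ℝ} (hμ0 : ∀ᵐ x ∂μ, 0 ≤ x)
    (hμ1 : ∫ x, x ∂μ = 1) : powerBias 1 μ = μ.withDensity fun x => ENNReal.ofReal x := by
  have habs : (fun x => |x|) =ᵐ[μ] id := hμ0.mono fun x hx => abs_of_nonneg hx
  simp only [powerBias, rpow_one, integral_congr_ae habs, id, hμ1, ENNReal.ofReal_one, inv_one,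
    one_smul]
  exact withDensity_congr_ae (habs.fun_comp ENNReal.ofReal)

theorem uniformIoo_zero_one : uniformIoo 0 1 = volume.restrict (Ioc 0 1) := by
  simp [uniformIoo, Measure.restrict_congr_set Ioo_ae_eq_Ioc]

theorem map_mul_prod_powerBias_one_Iic {μ : Measure ℝ} [SFinite μ] (hμ0 : ∀ᵐ x ∂μ, 0 ≤ x)
    (hμ1 : ∫ x, x ∂μ = 1) (a : ℝ) :
    Measure.map (fun p : ℝ × ℝ => p.1 * p.2) ((uniformIoo 0 1).prod (powerBias 1 μ)) (Iic a)
      = ∫⁻ x, ENNReal.ofReal (min x a) ∂μ := by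
  have hs : MeasurableSet ((fun p : ℝ × ℝ => p.1 * p.2) ⁻¹' Iic a) :=
    measurableSet_Iic.preimage (by fun_prop)
  rw [uniformIoo_zero_one, powerBias_one_eq_withDensity hμ0 hμ1,
    Measure.map_apply (by fun_prop) measurableSet_Iic, Measure.prod_apply_symm hs,
    lintegral_withDensity_eq_lintegral_mul _ (by fun_prop) (measurable_measure_prodMk_right hs)]
  refine lintegral_congr_ae (hμ0.mono fun v hv => ?_)
  rcases hv.eq_or_lt with rfl | hv
  · simp
  have hsec : (fun u => (u, v)) ⁻¹' ((fun p : ℝ × ℝ => p.1 * p.2) ⁻¹' Iic a) = Iic (a / v) := by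
    ext u
    simp [le_div_iff₀ hv]
  rw [Pi.mul_apply, hsec, Measure.restrict_apply measurableSet_Iic, inter_comm, Ioc_inter_Iic,
    Real.volume_Ioc, sub_zero, ← ENNReal.ofReal_mul hv.le, mul_min_of_nonneg _ _ hv.le, mul_one,
    mul_div_cancel₀ _ hv.ne']

theorem measure_Iic_eq_lintegral_min_of_stein {μ : Measure ℝ} [IsFiniteMeasure μ]
    (hμ0 : ∀ᵐ x ∂μ, 0 ≤ x) (hμ : Integrable id μ)
    (hstein : ∀ f f' : ℝ → ℝ, IsAbsContWithBddDeriv f f' → ∫ x, f' x ∂μ = ∫ x, f x ∂μ - f 0)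
    (a : ℝ) : μ (Iic a) = ∫⁻ x, ENNReal.ofReal (min x a) ∂μ := by
  rcases lt_or_ge a 0 with ha | ha
  · rw [measure_Iic_eq_zero_of_neg hμ0 ha]
    simp [ENNReal.ofReal_eq_zero.2 ((min_le_right _ a).trans ha.le)]
  have hf := isAbsContWithBddDeriv_min ha
  have h := hstein _ _ hf
  rw [integral_indicator_one measurableSet_Iic, min_eq_left ha, sub_zero] at h
  rw [← ofReal_measureReal, h, ofReal_integral_eq_lintegral_ofReal (hf.integrable hμ)
    (hμ0.mono fun x hx => le_min hx ha)]

theorem eq_expMeasure_of_measure_Iic_eq_lintegral_min {μ : Measure ℝ} [IsProbabilityMeasure μ]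
    (hμ0 : ∀ᵐ x ∂μ, 0 ≤ x) (hμ : Integrable id μ)
    (h : ∀ a, 0 ≤ a → μ (Iic a) = ∫⁻ x, ENNReal.ofReal (min x a) ∂μ) : μ = expMeasure 1 := by
  refine eq_of_measureReal_Iic_eq_integral hμ0 ae_nonneg_expMeasure_one (fun a ha => ?_)
    fun a ha => measureReal_Iic_expMeasure_one ha
  rw [← integral_min_eq_intervalIntegral_measureReal_Ioi hμ0 hμ ha,
    integral_eq_lintegral_of_nonneg_ae (hμ0.mono fun x hx => le_min hx ha) (by fun_prop),
    measureReal_def, h a ha]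

/-- For a nonnegative random variable `W` with finite mean, the following are equivalent:
(1) `W` is exponential with mean one;
(2) `E f'(W) = E f(W) - f(0)` for all absolutely continuous `f` with bounded derivative;
(3) `E W = 1` and `W` is equal in distribution to `U·W⁽¹⁾` where `W⁽¹⁾` has the size-biased
distribution of `W` and `U` is uniform on `(0,1)` independent of `W⁽¹⁾`. -/
theorem exponential_characterizations
    {Ω : Type*} [MeasureSpace Ω] [IsProbabilityMeasure (ℙ : Measure Ω)]
    (W : Ω → ℝ) (hW : Measurable W) (hWnonneg : ∀ᵐ ω ∂ℙ, 0 ≤ W ω)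
    (hint : Integrable W ℙ) :
    [ Measure.map W ℙ = expMeasure 1,
      ∀ f f' : ℝ → ℝ, IsAbsContWithBddDeriv f f' →
        ∫ ω, f' (W ω) ∂ℙ = (∫ ω, f (W ω) ∂ℙ) - f 0,
      (∫ ω, W ω ∂ℙ) = 1 ∧
        Measure.map W ℙ
          = Measure.map (fun p : ℝ × ℝ => p.1 * p.2)
              ((uniformIoo 0 1).prod (powerBias 1 (Measure.map W ℙ))) ].TFAE := by
  set μ := Measure.map W ℙ
  have : IsProbabilityMeasure μ := Measure.isProbabilityMeasure_map hW.aemeasurable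
  have hμ0 : ∀ᵐ x ∂μ, 0 ≤ x := (ae_map_iff hW.aemeasurable measurableSet_Ici).2 hWnonneg
  have hμ : Integrable id μ := (integrable_map_measure aestronglyMeasurable_id hW.aemeasurable).2 hint
  have hmean : ∫ ω, W ω ∂ℙ = ∫ x, x ∂μ :=
    (integral_map hW.aemeasurable aestronglyMeasurable_id).symm
  have hstein : (∀ f f' : ℝ → ℝ, IsAbsContWithBddDeriv f f' →
      ∫ ω, f' (W ω) ∂ℙ = (∫ ω, f (W ω) ∂ℙ) - f 0) ↔
      ∀ f f' : ℝ → ℝ, IsAbsContWithBddDeriv f f' → ∫ x, f' x ∂μ = ∫ x, f x ∂μ - f 0 := by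
    refine forall₂_congr fun f f' => imp_congr_right fun hf => ?_
    rw [integral_map hW.aemeasurable hf.1.aestronglyMeasurable,
      integral_map hW.aemeasurable hf.continuous.aestronglyMeasurable]
  rw [hstein, hmean]
  tfae_have 1 → 2 := fun h => h ▸ fun _ _ => integral_deriv_expMeasure_one
  tfae_have 2 → 3 := fun h => by
    have h1 : ∫ x, x ∂μ = 1 := by simpa using (h _ _ isAbsContWithBddDeriv_id).symm
    refine ⟨h1, Measure.ext_of_Iic _ _ fun a => ?_⟩
    rw [map_mul_prod_powerBias_one_Iic hμ0 h1, measure_Iic_eq_lintegral_min_of_stein hμ0 hμ h]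
  tfae_have 3 → 1 := fun ⟨h1, h⟩ => by
    refine eq_expMeasure_of_measure_Iic_eq_lintegral_min hμ0 hμ fun a _ => ?_
    conv_lhs => rw [h]
    exact map_mul_prod_powerBias_one_Iic hμ0 h1 a
  tfae_finish
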